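/- Let S be a nonempty binary search tree with n nodes, with left subtree L and right subtree R of the root. Then DF(Preorder(S)) ≤ DF(Preorder(L)) + DF(Preorder(R)) + 2·log₂(n + 1), where for a sequence σ = (s_1,...,s_m) of distinct keys, DF(σ) = Σ_{i=2}^{m} log₂(|r_σ(s_i) − r_σ(s_{i−1})| + 1) and r_σ(x) is the number of elements s of σ with s ≤ x. -/
import Mathlib


/-- Binary trees with keys at internal nodes. -/
inductive BT (α : Type) where
  | leaf : BT α
  | node : BT α → α → BT α → BT α
deriving DecidableEq

namespace BT

variable {α : Type} [LinearOrder α]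

/-- The list of keys of a tree, in symmetric (inorder) order. -/
def keys : BT α → List α
  | leaf => []
  | node l v r => keys l ++ v :: keys r

/-- The number of nodes of a tree. -/
def size : BT α → ℕ
  | leaf => 0
  | node l _ r => size l + size r + 1

/-- The symmetric-order (binary search tree) property. -/
def IsBST : BT α → Prop
  | leaf => True
  | node l v r => (∀ x ∈ l.keys, x < v) ∧ (∀ x ∈ r.keys, v < x) ∧ l.IsBST ∧ r.IsBST

/-- Preorder of a binary tree: root, then left subtree, then right subtree. -/
def preorder : BT α → List α
  | leaf => []
  | node l v r => v :: (preorder l ++ preorder r)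

/-- Postorder of a binary tree: left subtree, right subtree, then root. -/
def postorder : BT α → List α
  | leaf => []
  | node l v r => postorder l ++ postorder r ++ [v]

/-- Reversed preorder: root, then right subtree, then left subtree
(the preorder of the mirror image). -/
def revPreorder : BT α → List α
  | leaf => []
  | node l v r => v :: (revPreorder r ++ revPreorder l)

/-- Standard leaf insertion into a binary search tree. -/
def insertKey : BT α → α → BT α
  | leaf, x => node leaf x leaf
  | node l v r, x =>
    if x < v then node (insertKey l x) v r
    else if v < x then node l v (insertKey r x)
    else node l v r

/-- The depth (number of edges from the root) of the node with key `x`,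
located by binary search. -/
def depthOf : BT α → α → ℕ
  | leaf, _ => 0
  | node l v r, x =>
    if x < v then depthOf l x + 1
    else if v < x then depthOf r x + 1
    else 0

/-- The search path to the key `x`: `false` records a step to a left child,
`true` a step to a right child. -/
def pathTo : BT α → α → List Bool
  | leaf, _ => []
  | node l v r, x =>
    if x < v then false :: pathTo l x
    else if v < x then true :: pathTo r x
    else []

/-- The left-depth of the node with key `x`: the number of left-child edges
on the path from the root to it. -/
def leftDepthKey : BT α → α → ℕ
  | leaf, _ => 0
  | node l v r, x =>
    if x < v then leftDepthKey l x + 1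
    else if v < x then leftDepthKey r x
    else 0

/-- The subtree rooted at the node with key `x` (empty if `x` is absent). -/
def subtreeAt : BT α → α → BT α
  | leaf, _ => leaf
  | node l v r, x =>
    if x < v then subtreeAt l x
    else if v < x then subtreeAt r x
    else node l v r

/-- The key at the root, if any. -/
def rootKey : BT α → Option α
  | leaf => none
  | node _ v _ => some v

/-- The key of the parent of the node with key `x`, if any. -/
def parentKey : BT α → α → Option α
  | leaf, _ => none
  | node l v r, x =>
    if x < v then (if l.rootKey = some x then some v else l.parentKey x)
    else if v < x then (if r.rootKey = some x then some v else r.parentKey x)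
    else none

/-- A step of the context (zipper) describing the search path from the root
to the current subtree: `inL v r` means the current subtree is the left child
of a node with key `v` and right subtree `r`; `inR l v` means it is the right
child of a node with key `v` and left subtree `l`. -/
inductive Ctx (α : Type) where
  | inL : α → BT α → Ctx α
  | inR : BT α → α → Ctx α

/-- Descend along the search path for `x`, recording the context.
The head of the returned list corresponds to the immediate parent. -/
def descend : BT α → α → List (Ctx α) → List (Ctx α) × BT α
  | leaf, _, acc => (acc, leaf)
  | node l v r, x, acc =>
    if x < v then descend l x (Ctx.inL v r :: acc)
    else if v < x then descend r x (Ctx.inR l v :: acc)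
    else (acc, node l v r)

/-- Reattach a subtree into its context, with no rotations. -/
def rebuild : BT α → List (Ctx α) → BT α
  | t, [] => t
  | t, Ctx.inL v r :: cs => rebuild (node t v r) cs
  | t, Ctx.inR l v :: cs => rebuild (node l v t) cs

/-- Bottom-up splay steps: repeatedly apply zig / zig-zig / zig-zag steps to
the current subtree (rooted at the node being splayed) until the context is
exhausted. -/
def splayLoop : BT α → List (Ctx α) → BT α
  | t, [] => t
  | node a x b, [Ctx.inL v r] => node a x (node b v r)          -- zig
  | node a x b, [Ctx.inR l v] => node (node l v a) x b          -- zig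
  | node a x b, Ctx.inL p pr :: Ctx.inL g gr :: cs =>           -- zig-zig
      splayLoop (node a x (node b p (node pr g gr))) cs
  | node a x b, Ctx.inL p pr :: Ctx.inR gl g :: cs =>           -- zig-zag
      splayLoop (node (node gl g a) x (node b p pr)) cs
  | node a x b, Ctx.inR pl p :: Ctx.inR gl g :: cs =>           -- zig-zig
      splayLoop (node (node (node gl g pl) p a) x b) cs
  | node a x b, Ctx.inR pl p :: Ctx.inL g gr :: cs =>           -- zig-zag
      splayLoop (node (node pl p a) x (node b g gr)) cs
  | leaf, cs => rebuild leaf cs   -- unreachable when the splayed key is present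

/-- Splaying the key `x`: if `x` occurs in the tree, bring its node to the
root by bottom-up splay steps; otherwise leave the tree unchanged. -/
def splay (x : α) (t : BT α) : BT α :=
  match descend t x [] with
  | (_, leaf) => t
  | (cs, found) => splayLoop found cs

/-- `α`-weight-balance in the sense of Nievergelt–Reingold:
at each node, `min(|L|,|R|) + 1 ≥ α * (|x| + 1)`. -/
def WeightBalanced (a : ℝ) : BT α → Prop
  | leaf => True
  | node l _ r =>
      (min l.size r.size + 1 : ℝ) ≥ a * ((l.size + r.size + 1 : ℕ) + 1 : ℝ) ∧
      WeightBalanced a l ∧ WeightBalanced a r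

/-- The rank of `x` in `t`: the number of keys of `t` that are `≤ x`. -/
def rank (t : BT α) (x : α) : ℕ := (t.keys.filter (fun y => y ≤ x)).length

end BT

section Defs

variable {α : Type} [LinearOrder α]

/-- The insertion tree of a sequence: leaf-insert the keys in order. -/
def bstOf (π : List α) : BT α := π.foldl BT.insertKey BT.leaf

/-- `q` is a sub-root: a node of `t` not yet touched whose parent is touched,
where `touched` is the list of touched keys. -/
def IsSubRoot (t : BT α) (touched : List α) (q : α) : Prop :=
  q ∈ t.keys ∧ q ∉ touched ∧ ∃ p, t.parentKey q = some p ∧ p ∈ touched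

/-- π avoids the pattern (2,3,1). -/
def Avoids231 (π : List α) : Prop :=
  ¬ ∃ i j k : Fin π.length, i < j ∧ j < k ∧ π.get k < π.get i ∧ π.get i < π.get j

/-- π avoids the pattern (3,1,2). -/
def Avoids312 (π : List α) : Prop :=
  ¬ ∃ i j k : Fin π.length, i < j ∧ j < k ∧ π.get j < π.get k ∧ π.get k < π.get i

/-- π avoids the pattern (2,1,3). -/
def Avoids213 (π : List α) : Prop :=
  ¬ ∃ i j k : Fin π.length, i < j ∧ j < k ∧ π.get j < π.get i ∧ π.get i < π.get k

/-- π contains a strictly decreasing subsequence of length `k`. -/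
def HasDecreasingSubseq (π : List α) (k : ℕ) : Prop :=
  ∃ s : List α, s.Sublist π ∧ s.length = k ∧ s.Chain' (· > ·)

/-- Splay the keys of a list in order, starting from `t`. -/
def splaySeq (π : List α) (t : BT α) : BT α := π.foldl (fun s x => BT.splay x s) t

/-- The cost of splaying a sequence of keys starting from `t`:
each splay costs the current depth of the requested key plus one. -/
def splayCost : BT α → List α → ℕ
  | _, [] => 0
  | t, x :: xs => (t.depthOf x + 1) + splayCost (BT.splay x t) xs

/-- The cost of insertion splaying a sequence of keys starting from `t`:
each key is leaf-inserted, then the new node is splayed, at a cost of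
its depth after insertion plus one. -/
def insertSplayCost : BT α → List α → ℕ
  | _, [] => 0
  | t, x :: xs =>
    ((t.insertKey x).depthOf x + 1) + insertSplayCost (BT.splay x (t.insertKey x)) xs

/-- `DF rk xs` = Σ_{i≥2} log₂(|rk(x_i) − rk(x_{i−1})| + 1). -/
noncomputable def DF (rk : α → ℕ) (xs : List α) : ℝ :=
  ((xs.zip xs.tail).map
    (fun p => Real.logb 2 (|(rk p.2 : ℝ) - (rk p.1 : ℝ)| + 1))).sum

/-- The rank of `x` within the sequence `σ` itself. -/
def rankIn (σ : List α) (x : α) : ℕ := (σ.filter (fun y => y ≤ x)).length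

/-- The dynamic-finger sum of a sequence, with ranks computed in the
sequence itself. -/
noncomputable def DFseq (σ : List α) : ℝ := DF (rankIn σ) σ

end Defs

set_option linter.unusedSectionVars false
section Helpers
variable {α : Type} [LinearOrder α]

lemma DF_nil (rk : α → ℕ) : DF rk ([] : List α) = 0 := rfl
lemma DF_single (rk : α → ℕ) (a : α) : DF rk [a] = 0 := rfl

lemma DF_cons (rk : α → ℕ) (a b : α) (t : List α) :
    DF rk (a :: b :: t) = Real.logb 2 (|(rk b : ℝ) - rk a| + 1) + DF rk (b :: t) := by
  simp [DF]

lemma DF_append (rk : α → ℕ) (xs ys : List α) (hx : xs ≠ []) (hy : ys ≠ []) :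
    DF rk (xs ++ ys) = DF rk xs +
      Real.logb 2 (|(rk (ys.head hy) : ℝ) - rk (xs.getLast hx)| + 1) + DF rk ys := by
  induction xs with
  | nil => simp at hx
  | cons a t ih =>
    cases t with
    | nil =>
      cases ys with
      | nil => simp at hy
      | cons c u =>
        simp [DF_cons, DF_single]
    | cons b t' =>
      have hih := ih (by simp)
      have e : DF rk ((a :: b :: t') ++ ys) =
          Real.logb 2 (|(rk b : ℝ) - rk a| + 1) + DF rk ((b :: t') ++ ys) :=
        DF_cons rk a b (t' ++ ys)
      rw [e, hih, DF_cons, List.getLast_cons (by simp : b :: t' ≠ [])]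
      ring

lemma DF_congr (rk rk' : α → ℕ) (xs : List α) (c : ℤ)
    (h : ∀ x ∈ xs, (rk x : ℤ) = rk' x + c) : DF rk xs = DF rk' xs := by
  unfold DF
  congr 1
  apply List.map_congr_left
  intro p hp
  obtain ⟨h1, h2⟩ := List.of_mem_zip hp
  have h1' := h p.1 h1
  have h2' := h p.2 (List.mem_of_mem_tail h2)
  have e1 : (rk p.1 : ℝ) = (rk' p.1 : ℝ) + (c : ℝ) := by exact_mod_cast h1'
  have e2 : (rk p.2 : ℝ) = (rk' p.2 : ℝ) + (c : ℝ) := by exact_mod_cast h2'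
  rw [e1, e2]
  ring_nf

lemma term_le (rk : α → ℕ) (n : ℕ) (a b : α) (ha : rk a ≤ n) (hb : rk b ≤ n) :
    Real.logb 2 (|(rk b : ℝ) - rk a| + 1) ≤ Real.logb 2 ((n : ℝ) + 1) := by
  have h1 : |(rk b : ℝ) - rk a| ≤ n := by
    rw [abs_sub_le_iff]
    constructor <;>
      linarith [(Nat.cast_le (α := ℝ)).2 ha, (Nat.cast_le (α := ℝ)).2 hb,
        Nat.cast_nonneg (α := ℝ) (rk a), Nat.cast_nonneg (α := ℝ) (rk b)]
  have h2 : (0:ℝ) < |(rk b : ℝ) - rk a| + 1 := by positivity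
  exact Real.logb_le_logb_of_le (by norm_num) h2 (by linarith)

lemma logb_n_nonneg (n : ℕ) : 0 ≤ Real.logb 2 ((n : ℝ) + 1) :=
  Real.logb_nonneg (by norm_num) (by linarith [Nat.cast_nonneg (α := ℝ) n])

end Helpers


section Split
variable {α : Type} [LinearOrder α]

lemma rankIn_left (v : α) (lp rp : List α) (x : α) (hxv : x < v)
    (hr : ∀ y ∈ rp, v < y) :
    rankIn (v :: (lp ++ rp)) x = rankIn lp x := by
  have h1 : rp.filter (fun y => y ≤ x) = [] :=
    List.filter_eq_nil_iff.mpr fun y hy => by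
      simpa using not_le.2 (hxv.trans (hr y hy))
  simp [rankIn, List.filter_cons, List.filter_append, h1, not_le.2 hxv]

lemma rankIn_right (v : α) (lp rp : List α) (x : α) (hvx : v < x)
    (hl : ∀ y ∈ lp, y < v) :
    rankIn (v :: (lp ++ rp)) x = rankIn rp x + (lp.length + 1) := by
  have h1 : lp.filter (fun y => y ≤ x) = lp :=
    List.filter_eq_self.mpr fun y hy =>
      decide_eq_true (le_of_lt ((hl y hy).trans hvx))
  simp [rankIn, List.filter_cons, List.filter_append, h1, le_of_lt hvx]
  ring

lemma df_split (v : α) (lp rp : List α) (n : ℕ)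
    (hl : ∀ x ∈ lp, x < v) (hr : ∀ x ∈ rp, v < x)
    (hn : (v :: (lp ++ rp)).length ≤ n) :
    DFseq (v :: (lp ++ rp)) ≤ DFseq lp + DFseq rp + 2 * Real.logb 2 ((n : ℝ) + 1) := by
  have hrk : ∀ x : α, rankIn (v :: (lp ++ rp)) x ≤ n := fun x =>
    le_trans (List.length_filter_le _ _) hn
  have hterm : ∀ a b : α,
      Real.logb 2 (|(rankIn (v :: (lp ++ rp)) b : ℝ) - rankIn (v :: (lp ++ rp)) a| + 1) ≤
        Real.logb 2 ((n : ℝ) + 1) := fun a b => term_le _ n a b (hrk a) (hrk b)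
  have hDFl : DF (rankIn (v :: (lp ++ rp))) lp = DFseq lp :=
    DF_congr _ _ _ 0 fun x hx => by
      rw [rankIn_left v lp rp x (hl x hx) hr]; ring
  have hDFr : DF (rankIn (v :: (lp ++ rp))) rp = DFseq rp :=
    DF_congr _ _ _ (lp.length + 1) fun x hx => by
      rw [rankIn_right v lp rp x (hr x hx) hl]; push_cast; ring
  have hlog0 := logb_n_nonneg n
  rcases lp with _ | ⟨a, lt⟩ <;> rcases rp with _ | ⟨b, rt⟩
  · simp only [List.nil_append]
    have : DFseq [v] = 0 := rfl
    have h0 : DFseq ([] : List α) = 0 := rfl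
    rw [this, h0]
    linarith
  · simp only [List.nil_append] at hterm hDFr ⊢
    have e1 : DFseq (v :: b :: rt) =
        Real.logb 2 (|(rankIn (v :: b :: rt) b : ℝ) - rankIn (v :: b :: rt) v| + 1) +
          DF (rankIn (v :: b :: rt)) (b :: rt) := DF_cons _ v b rt
    have h0 : DFseq ([] : List α) = 0 := rfl
    rw [e1, hDFr, h0]
    linarith [hterm v b]
  · simp only [List.append_nil] at hterm hDFl ⊢
    have e1 : DFseq (v :: a :: lt) =
        Real.logb 2 (|(rankIn (v :: a :: lt) a : ℝ) - rankIn (v :: a :: lt) v| + 1) +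
          DF (rankIn (v :: a :: lt)) (a :: lt) := DF_cons _ v a lt
    have h0 : DFseq ([] : List α) = 0 := rfl
    rw [e1, hDFl, h0]
    linarith [hterm v a]
  · have e1 : DFseq (v :: ((a :: lt) ++ (b :: rt))) =
        Real.logb 2 (|(rankIn (v :: ((a :: lt) ++ (b :: rt))) a : ℝ) -
            rankIn (v :: ((a :: lt) ++ (b :: rt))) v| + 1) +
          DF (rankIn (v :: ((a :: lt) ++ (b :: rt)))) ((a :: lt) ++ (b :: rt)) :=
      DF_cons _ v a (lt ++ (b :: rt))
    have e2 := DF_append (rankIn (v :: ((a :: lt) ++ (b :: rt)))) (a :: lt) (b :: rt)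
      (by simp) (by simp)
    simp only [List.head_cons] at e2
    rw [e1, e2, hDFl, hDFr]
    linarith [hterm v a, hterm ((a :: lt).getLast (by simp)) b]
end Split

section TreeLemmas
variable {α : Type} [LinearOrder α]

lemma BT.mem_preorder (t : BT α) (x : α) : x ∈ t.preorder ↔ x ∈ t.keys := by
  induction t with
  | leaf => simp [BT.preorder, BT.keys]
  | node l v r ihl ihr =>
    simp [BT.preorder, BT.keys, ihl, ihr]
    tauto

lemma BT.length_preorder (t : BT α) : t.preorder.length = t.size := by
  induction t with
  | leaf => rfl
  | node l v r ihl ihr => simp [BT.preorder, BT.size, ihl, ihr]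

end TreeLemmas

/-- Recursive bound on the dynamic-finger sum of a preorder: for a nonempty
binary search tree with left subtree `L`, right subtree `R`, and `n` nodes,
`DF(Preorder(S)) ≤ DF(Preorder(L)) + DF(Preorder(R)) + 2·log₂(n+1)`. -/
theorem df_preorder_recursion {α : Type} [LinearOrder α]
    (L R : BT α) (v : α) (hbst : (BT.node L v R).IsBST) :
    DFseq (BT.node L v R).preorder ≤
      DFseq L.preorder + DFseq R.preorder +
        2 * Real.logb 2 (((BT.node L v R).size : ℝ) + 1) := by
  obtain ⟨hlv, hvr, hbl, hbr⟩ := hbst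
  have hpre : (BT.node L v R).preorder = v :: (L.preorder ++ R.preorder) := rfl
  have hlen : (v :: (L.preorder ++ R.preorder)).length ≤ (BT.node L v R).size := by
    rw [← hpre, BT.length_preorder]
  rw [hpre]
  exact df_split v L.preorder R.preorder (BT.node L v R).size
    (fun x hx => hlv x ((BT.mem_preorder L x).1 hx))
    (fun x hx => hvr x ((BT.mem_preorder R x).1 hx)) hlen
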